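/- Let DG = (V, E) be a dynamic graph with node features X, let t be a time, and let M be a Global HopeDGN on DG whose functions AGG, UPDATE, f_1, and f_2 are all injective. Suppose the 2-DWL test on DG is initialized with a node-pair labeling l satisfying l((u, v)) = l((u', v')) if and only if [X_u || X_v] = [X_{u'} || X_{v'}] for all (u, v), (u', v') ∈ V², and uses an injective hash. Then for every iteration j ≥ 0 there exists an injective function φ_j such that h^{(j)}_t(s) = φ_j(c^{(j)}_t(s)) for every node pair s ∈ V², where c^{(j)}_t and h^{(j)}_t denote the 2-DWL colors and the HopeDGN embeddings at iteration/layer j. -/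
import Mathlib


/-- Historical interaction sequence `A^{<t}_{u,v}`: the sorted list of all
timestamps `t' < t` with `(u,v,t') ∈ E` or `(v,u,t') ∈ E`. -/
noncomputable def hist {V : Type} [DecidableEq V] (E : Multiset (V × V × ℝ)) (t : ℝ)
    (u v : V) : List ℝ :=
  ((E.filter fun e => ((e.1 = u ∧ e.2.1 = v) ∨ (e.1 = v ∧ e.2.1 = u)) ∧ e.2.2 < t).map
    fun e => e.2.2).sort (· ≤ ·)

/-- Time-interval sequence `B^t_{u,v}`: obtained from `A^{<t}_{u,v}` by replacing
each timestamp `a` by `t - a`. -/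
noncomputable def Bseq {V : Type} [DecidableEq V] (E : Multiset (V × V × ℝ)) (t : ℝ)
    (u v : V) : List ℝ :=
  (hist E t u v).map fun a => t - a

/-- 2-DWL colors on node pairs at time `t`: `c⁰ = l` and
`c^{j+1}(v₁,v₂) = HASH (c^j(v₁,v₂), {{ (c^j(w,v₂), c^j(v₁,w), A^{<t}_{w,v₁}, A^{<t}_{w,v₂}) : w ∈ V }})`. -/
noncomputable def dwl2 {V : Type} [Fintype V] [DecidableEq V] {C : Type}
    (E : Multiset (V × V × ℝ)) (t : ℝ) (l : V × V → C)
    (hash : C × Multiset (C × C × List ℝ × List ℝ) → C) : ℕ → V × V → C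
  | 0 => l
  | j + 1 => fun s =>
      hash (dwl2 E t l hash j s,
        (Finset.univ : Finset V).val.map fun w =>
          (dwl2 E t l hash j (w, s.2), dwl2 E t l hash j (s.1, w),
           hist E t w s.1, hist E t w s.2))

/-- Global HopeDGN node-pair embeddings at time `t`:
`h⁰(u,v) = [X_u ‖ X_v]` and
`h^{l+1}(s) = UPDATE (h^l(s), AGG {{ ψ(s,w) : w ∈ V }})` with
`ψ((u,v),w) = [f₁([h^l(u,w) ‖ h^l(v,w)]) ‖ f₂([B^t_{u,w} ‖ B^t_{v,w}])]`. -/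
noncomputable def hope {V : Type} [Fintype V] [DecidableEq V] {dN d1 d2 dA : ℕ}
    (E : Multiset (V × V × ℝ)) (t : ℝ) (X : V → Fin dN → ℝ)
    (f1 : (Fin (dN + dN) → ℝ) × (Fin (dN + dN) → ℝ) → Fin d1 → ℝ)
    (f2 : List ℝ × List ℝ → Fin d2 → ℝ)
    (AGG : Multiset ((Fin d1 → ℝ) × (Fin d2 → ℝ)) → Fin dA → ℝ)
    (UPDATE : (Fin (dN + dN) → ℝ) × (Fin dA → ℝ) → Fin (dN + dN) → ℝ) :
    ℕ → V × V → Fin (dN + dN) → ℝ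
  | 0 => fun s => Fin.append (X s.1) (X s.2)
  | j + 1 => fun s =>
      UPDATE (hope E t X f1 f2 AGG UPDATE j s,
        AGG ((Finset.univ : Finset V).val.map fun w =>
          (f1 (hope E t X f1 f2 AGG UPDATE j (s.1, w),
               hope E t X f1 f2 AGG UPDATE j (s.2, w)),
           f2 (Bseq E t s.1 w, Bseq E t s.2 w))))

lemma hist_comm {V : Type} [DecidableEq V] (E : Multiset (V × V × ℝ)) (t : ℝ) (u v : V) :
    hist E t u v = hist E t v u := by
  unfold hist
  congr 1
  congr 1
  exact Multiset.filter_congr (fun e _ => by tauto)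

lemma map_Bseq {V : Type} [DecidableEq V] (E : Multiset (V × V × ℝ)) (t : ℝ) (u v : V) :
    (Bseq E t u v).map (fun a => t - a) = hist E t u v := by
  unfold Bseq
  rw [List.map_map]
  have h : ((fun a : ℝ => t - a) ∘ fun a : ℝ => t - a) = id := by
    funext a; simp
  rw [h, List.map_id]

lemma append_inj' {n : ℕ} {a b c d : Fin n → ℝ} (h : Fin.append a b = Fin.append c d) :
    a = c ∧ b = d := by
  constructor <;> funext i
  · simpa using congrFun h (Fin.castAdd n i)
  · have := congrFun h (Fin.natAdd n i)
    rwa [Fin.append_right, Fin.append_right] at this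

lemma factor_through {A B D : Type} [Nonempty D] (f : A → B) (g : A → D)
    (h : ∀ p q : A, f p = f q → g p = g q) : ∃ k : B → D, ∀ p, g p = k (f p) := by
  classical
  refine ⟨fun b => if h' : ∃ p, f p = b then g h'.choose else Classical.arbitrary D,
    fun p => ?_⟩
  have h' : ∃ q, f q = f p := ⟨p, rfl⟩
  beta_reduce
  rw [dif_pos h']
  exact (h h'.choose p h'.choose_spec).symm

/-- for a Global HopeDGN with injective `AGG`, `UPDATE`, `f₁`, `f₂`
and the 2-DWL test initialized with a feature-consistent node-pair labeling and an
injective hash, at each iteration `j` the HopeDGN embeddings factor through the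
2-DWL colors via a function `φⱼ` that is injective on the colors assigned at
iteration `j`: `h^{(j)}_t(s) = φⱼ(c^{(j)}_t(s))` for every node pair `s`. -/
theorem hope_injective_factorization {V : Type} [Fintype V] [DecidableEq V]
    {C : Type} {dN d1 d2 dA : ℕ}
    (E : Multiset (V × V × ℝ)) (t : ℝ)
    (X : V → Fin dN → ℝ)
    (l : V × V → C)
    (hl : ∀ p q : V × V,
      l p = l q ↔ Fin.append (X p.1) (X p.2) = Fin.append (X q.1) (X q.2))
    (hash : C × Multiset (C × C × List ℝ × List ℝ) → C)
    (hash_inj : Function.Injective hash)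
    (f1 : (Fin (dN + dN) → ℝ) × (Fin (dN + dN) → ℝ) → Fin d1 → ℝ)
    (f2 : List ℝ × List ℝ → Fin d2 → ℝ)
    (AGG : Multiset ((Fin d1 → ℝ) × (Fin d2 → ℝ)) → Fin dA → ℝ)
    (UPDATE : (Fin (dN + dN) → ℝ) × (Fin dA → ℝ) → Fin (dN + dN) → ℝ)
    (f1_inj : Function.Injective f1) (f2_inj : Function.Injective f2)
    (AGG_inj : Function.Injective AGG) (UPDATE_inj : Function.Injective UPDATE) :
    ∀ j : ℕ, ∃ φ : C → Fin (dN + dN) → ℝ,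
      Set.InjOn φ (Set.range (dwl2 E t l hash j)) ∧
      ∀ s : V × V, hope E t X f1 f2 AGG UPDATE j s = φ (dwl2 E t l hash j s) := by
  classical
  by_cases hV : Nonempty V
  · haveI := hV
    haveI : Nonempty C := ⟨l (Classical.arbitrary V, Classical.arbitrary V)⟩
    suffices H : ∀ j : ℕ, ∃ (φ : C → Fin (dN + dN) → ℝ)
        (ψ : (Fin (dN + dN) → ℝ) → C) (σ : C → C),
        (∀ s : V × V, hope E t X f1 f2 AGG UPDATE j s = φ (dwl2 E t l hash j s)) ∧
        (∀ s : V × V, dwl2 E t l hash j s = ψ (hope E t X f1 f2 AGG UPDATE j s)) ∧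
        (∀ s : V × V, dwl2 E t l hash j (s.2, s.1) = σ (dwl2 E t l hash j s)) by
      intro j
      obtain ⟨φ, ψ, σ, h1, h2, _⟩ := H j
      refine ⟨φ, ?_, h1⟩
      rintro x ⟨s, rfl⟩ y ⟨s', rfl⟩ hxy
      rw [← h1 s, ← h1 s'] at hxy
      rw [h2 s, h2 s', hxy]
    intro j
    induction j with
    | zero =>
      have hswap : ∀ p q : V × V, l p = l q → l (p.2, p.1) = l (q.2, q.1) := by
        intro p q h
        obtain ⟨ha, hb⟩ := append_inj' ((hl p q).mp h)
        refine (hl (p.2, p.1) (q.2, q.1)).mpr ?_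
        show Fin.append (X p.2) (X p.1) = Fin.append (X q.2) (X q.1)
        rw [ha, hb]
      obtain ⟨φ, hφ⟩ := factor_through l
        (fun s : V × V => Fin.append (X s.1) (X s.2)) (fun p q h => (hl p q).mp h)
      obtain ⟨ψ, hψ⟩ := factor_through (fun s : V × V => Fin.append (X s.1) (X s.2))
        l (fun p q h => (hl p q).mpr h)
      obtain ⟨σ, hσ⟩ := factor_through l (fun s : V × V => l (s.2, s.1)) hswap
      exact ⟨φ, ψ, σ, hφ, hψ, hσ⟩
    | succ j IH =>
      obtain ⟨φ, ψ, σ, hφ, hψ, hσ⟩ := IH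
      have hinv_spec : ∀ x, Function.invFun hash (hash x) = x :=
        Function.leftInverse_invFun hash_inj
      have f1inv_spec : ∀ x, Function.invFun f1 (f1 x) = x :=
        Function.leftInverse_invFun f1_inj
      have f2inv_spec : ∀ x, Function.invFun f2 (f2 x) = x :=
        Function.leftInverse_invFun f2_inj
      have ainv_spec : ∀ x, Function.invFun AGG (AGG x) = x :=
        Function.leftInverse_invFun AGG_inj
      have uinv_spec : ∀ x, Function.invFun UPDATE (UPDATE x) = x :=
        Function.leftInverse_invFun UPDATE_inj
      refine ⟨fun c' => UPDATE (φ (Function.invFun hash c').1,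
          AGG ((Function.invFun hash c').2.map
            (fun x => (f1 (φ x.2.1, φ (σ x.1)),
              f2 (x.2.2.1.map (fun a => t - a), x.2.2.2.map (fun a => t - a)))))),
        fun e => hash (ψ (Function.invFun UPDATE e).1,
          (Function.invFun AGG (Function.invFun UPDATE e).2).map
            (fun y => (σ (ψ (Function.invFun f1 y.1).2), ψ (Function.invFun f1 y.1).1,
              (Function.invFun f2 y.2).1.map (fun a => t - a),
              (Function.invFun f2 y.2).2.map (fun a => t - a)))),
        fun c' => hash (σ (Function.invFun hash c').1,
          (Function.invFun hash c').2.map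
            (fun x => (σ x.2.1, σ x.1, x.2.2.2, x.2.2.1))),
        ?_, ?_, ?_⟩
      · intro s
        simp only [dwl2, hope, hinv_spec, Multiset.map_map]
        rw [hφ s]
        refine congrArg UPDATE (Prod.ext rfl
          (congrArg AGG (Multiset.map_congr rfl fun w _ => ?_)))
        simp only [Function.comp]
        rw [← hφ (s.1, w)]
        have h2 : σ (dwl2 E t l hash j (w, s.2)) = dwl2 E t l hash j (s.2, w) :=
          (hσ (w, s.2)).symm
        rw [h2, ← hφ (s.2, w), hist_comm E t w s.1, hist_comm E t w s.2]
        rfl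
      · intro s
        simp only [dwl2, hope, uinv_spec, ainv_spec, Multiset.map_map]
        rw [hψ s]
        refine congrArg hash (Prod.ext rfl (Multiset.map_congr rfl fun w _ => ?_))
        simp only [Function.comp, f1inv_spec, f2inv_spec]
        rw [← hψ (s.1, w), ← hψ (s.2, w), ← hσ (s.2, w), map_Bseq, map_Bseq,
          hist_comm E t s.1 w, hist_comm E t s.2 w]
      · intro s
        simp only [dwl2, hinv_spec, Multiset.map_map]
        rw [← hσ s]
        refine congrArg hash (Prod.ext rfl (Multiset.map_congr rfl fun w _ => ?_))
        simp only [Function.comp]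
        rw [← hσ (s.1, w), ← hσ (w, s.2)]
  · haveI : IsEmpty V := not_nonempty_iff.mp hV
    intro j
    refine ⟨fun _ _ => 0, ?_, fun s => isEmptyElim s⟩
    have : Set.range (dwl2 E t l hash j) = ∅ := Set.range_eq_empty _
    rw [this]
    exact Set.injOn_empty _
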